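/- arXiv:1410.5300 — 3 statements merged into one kernel-verified Lean document; each statement's English description precedes it below -/
import Mathlib

section
/- For all integers n ≥ 0 and k ≥ 1, every sequence of real numbers ᾱ = (α₀, α₁, …, α_{n−1}) and all nonzero real numbers ℓ₁, …, ℓ_k, the multiparameter poly-Cauchy numbers of the first kind satisfy C_{n,L}^{(k)}(ᾱ) = Σ_{j=0}^{n} Σ_{m=j}^{n} S(n,m;ᾱ) s(m,j) (ℓ₁ℓ₂⋯ℓ_k)^{j+1} / (j+1)^k. -/
/-! Expanding `∏ (t - αᵢ)` first in falling factorials and then in powers of `t` writes the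
integrand as a polynomial whose coefficient of `t ^ j` is `∑_{m ≥ j} S(n,m;ᾱ) s(m,j)`; each
monomial `(x₁⋯x_k) ^ j` integrates to `(ℓ₁⋯ℓ_k) ^ (j+1) / (j+1) ^ k`. -/

open Finset

/-- Iterated integral ∫₀^{ℓ₁}⋯∫₀^{ℓ_k} f(x₁x₂⋯x_k) dx₁⋯dx_k over the list of bounds. -/
noncomputable def iterInt : List ℝ → (ℝ → ℝ) → ℝ
  | [], f => f 1
  | l :: ls, f => ∫ x in (0:ℝ)..l, iterInt ls (fun y => f (x * y))

/-- Falling factorial (x)_m = x(x-1)⋯(x-m+1) of a real number. -/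
noncomputable def ffall (x : ℝ) (m : ℕ) : ℝ := ∏ i ∈ Finset.range m, (x - (i : ℝ))

lemma integral_sum_mul_pow (N : ℕ) (c : ℕ → ℝ) (l : ℝ) :
    ∫ x in (0:ℝ)..l, ∑ j ∈ range N, c j * x ^ j =
      ∑ j ∈ range N, c j * l ^ (j + 1) / ((j : ℝ) + 1) := by
  rw [intervalIntegral.integral_finsetSum fun j _ =>
    (by fun_prop : Continuous _).intervalIntegrable _ _]
  refine sum_congr rfl fun j _ => ?_
  rw [intervalIntegral.integral_const_mul, integral_pow]
  simp [mul_div_assoc]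

lemma iterInt_sum_mul_pow (N : ℕ) : ∀ (ls : List ℝ) (c : ℕ → ℝ),
    iterInt ls (fun t => ∑ j ∈ range N, c j * t ^ j) =
      ∑ j ∈ range N, c j * ls.prod ^ (j + 1) / ((j : ℝ) + 1) ^ ls.length
  | [], c => by simp [iterInt]
  | l :: ls, c => by
    have inner (x : ℝ) : iterInt ls (fun y => ∑ j ∈ range N, c j * (x * y) ^ j) =
        ∑ j ∈ range N, (c j * ls.prod ^ (j + 1) / ((j : ℝ) + 1) ^ ls.length) * x ^ j := by
      simp only [mul_pow, ← mul_assoc]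
      rw [iterInt_sum_mul_pow N ls (fun j => c j * x ^ j)]
      refine sum_congr rfl fun j _ => ?_
      ring
    simp only [iterInt, inner, integral_sum_mul_pow, List.prod_cons, List.length_cons]
    refine sum_congr rfl fun j _ => ?_
    have hj : (j : ℝ) + 1 ≠ 0 := by positivity
    field_simp
    ring

lemma sum_range_sum_range_succ_comm {M : Type*} [AddCommMonoid M] (n : ℕ) (f : ℕ → ℕ → M) :
    ∑ m ∈ range (n + 1), ∑ j ∈ range (m + 1), f m j =
      ∑ j ∈ range (n + 1), ∑ m ∈ Icc j n, f m j := by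
  simpa only [range_eq_Ico, Ico_add_one_right_eq_Icc] using
    (sum_Ico_Ico_comm 0 (n + 1) fun j m => f m j).symm

theorem stmt2_general (n k : ℕ) (α : ℕ → ℝ) (L : Fin k → ℝ)
    (S : ℕ → ℝ) (st : ℕ → ℕ → ℝ)
    (hS : ∀ x : ℝ, ∏ i ∈ range n, (x - α i) = ∑ m ∈ range (n + 1), S m * ffall x m)
    (hst : ∀ m ≤ n, ∀ x : ℝ, ffall x m = ∑ j ∈ range (m + 1), st m j * x ^ j) :
    iterInt (List.ofFn L) (fun t => ∏ i ∈ range n, (t - α i)) =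
      ∑ j ∈ range (n + 1), ∑ m ∈ Icc j n,
        S m * st m j * (∏ i, L i) ^ (j + 1) / ((j : ℝ) + 1) ^ k := by
  have expand (t : ℝ) : ∏ i ∈ range n, (t - α i) =
      ∑ j ∈ range (n + 1), (∑ m ∈ Icc j n, S m * st m j) * t ^ j := by
    have stirling : ∀ m ∈ range (n + 1), S m * ffall t m =
        ∑ j ∈ range (m + 1), S m * st m j * t ^ j := fun m hm => by
      rw [hst m (Nat.lt_succ_iff.mp (mem_range.mp hm)) t, mul_sum]
      simp only [mul_assoc]
    simp only [hS t, sum_congr rfl stirling, sum_range_sum_range_succ_comm, sum_mul]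
  rw [funext expand, iterInt_sum_mul_pow]
  simp only [List.prod_ofFn, List.length_ofFn, sum_mul, sum_div]

theorem stmt2 (n k : ℕ) (hk : 1 ≤ k) (α : ℕ → ℝ) (L : Fin k → ℝ)
    (hL : ∀ i, L i ≠ 0) (S : ℕ → ℝ) (st : ℕ → ℕ → ℝ)
    (hS : ∀ x : ℝ, ∏ i ∈ range n, (x - α i) = ∑ m ∈ range (n + 1), S m * ffall x m)
    (hst : ∀ m ≤ n, ∀ x : ℝ, ffall x m = ∑ j ∈ range (m + 1), st m j * x ^ j) :
    iterInt (List.ofFn L) (fun t => ∏ i ∈ range n, (t - α i)) =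
      ∑ j ∈ range (n + 1), ∑ m ∈ Icc j n,
        S m * st m j * (∏ i, L i) ^ (j + 1) / ((j : ℝ) + 1) ^ k :=
  stmt2_general n k α L S st hS hst
end

section
/- For all integers n ≥ 0 and k ≥ 1, every sequence of real numbers ᾱ = (α₀, α₁, …, α_{n−1}), all nonzero real numbers ℓ₁, …, ℓ_k, and every real number z, the multiparameter poly-Cauchy polynomials of the first kind satisfy C_{n,L}^{(k)}(z;ᾱ) = Σ_{i=0}^{n} Σ_{m=i}^{n} (−1)^i binom(m,i) s_ᾱ(n,m) (ℓ₁ℓ₂⋯ℓ_k)^{m−i+1} / (m−i+1)^k · z^i. -/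
open Finset

/-
Binomially expanding ∏ (t - αᵢ - z) = ∑ₘ s(m) (t - z)ᵐ writes the integrand as the polynomial
∑ᵢ ∑ₘ (-1)ⁱ C(m,i) s(m) zⁱ t^{m-i}. The iterated integral is linear on polynomials and sends tᵉ
to (ℓ₁⋯ℓ_k)^{e+1} / (e+1)^k.
-/

lemma iterInt_const_mul (ls : List ℝ) (c : ℝ) (f : ℝ → ℝ) :
    iterInt ls (fun t => c * f t) = c * iterInt ls f := by
  induction ls generalizing f with
  | nil => rfl
  | cons l ls ih => simp only [iterInt, ih, intervalIntegral.integral_const_mul]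

lemma iterInt_pow (ls : List ℝ) (e : ℕ) :
    iterInt ls (fun t => t ^ e) = ls.prod ^ (e + 1) / ((e : ℝ) + 1) ^ ls.length := by
  induction ls with
  | nil => simp [iterInt]
  | cons l ls ih =>
    simp only [iterInt, mul_pow, iterInt_const_mul, ih, intervalIntegral.integral_mul_const,
      integral_pow, List.prod_cons, List.length_cons]
    field_simp
    ring

lemma iterInt_sum_mul_pow_s14 {ι : Type*} (S : Finset ι) (c : ι → ℝ) (e : ι → ℕ) (ls : List ℝ) :
    iterInt ls (fun t => ∑ p ∈ S, c p * t ^ e p) =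
      ∑ p ∈ S, c p * iterInt ls (fun t => t ^ e p) := by
  induction ls generalizing c with
  | nil => rfl
  | cons l ls ih =>
    have hscale (x : ℝ) : iterInt ls (fun y => ∑ p ∈ S, c p * (x * y) ^ e p) =
        ∑ p ∈ S, c p * (x ^ e p * iterInt ls (fun y => y ^ e p)) := by
      simpa only [mul_pow, mul_assoc] using ih (fun p => c p * x ^ e p)
    simp only [iterInt, hscale]
    rw [intervalIntegral.integral_finsetSum fun p _ =>
      (by fun_prop : Continuous _).intervalIntegrable _ _]
    simp only [mul_pow, iterInt_const_mul, intervalIntegral.integral_const_mul]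

lemma sum_mul_sub_pow_eq_sum_sum {R : Type*} [CommRing R] (n : ℕ) (s : ℕ → R) (t z : R) :
    ∑ m ∈ range (n + 1), s m * (t - z) ^ m =
      ∑ i ∈ range (n + 1), ∑ m ∈ Icc i n,
        (-1) ^ i * (m.choose i : R) * s m * z ^ i * t ^ (m - i) := by
  have hbinom (m : ℕ) : s m * (t - z) ^ m =
      ∑ i ∈ range (m + 1), (-1) ^ i * (m.choose i : R) * s m * z ^ i * t ^ (m - i) := by
    rw [sub_eq_neg_add, add_pow, mul_sum]
    exact sum_congr rfl fun i _ => by rw [neg_pow]; ring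
  simp only [hbinom]
  exact sum_comm' fun m i => by simp only [mem_range, mem_Icc]; omega

theorem stmt14_general (n k : ℕ) (α : ℕ → ℝ) (L : Fin k → ℝ)
    (z : ℝ) (s : ℕ → ℝ)
    (hs : ∀ x : ℝ, ∏ i ∈ range n, (x - α i) = ∑ m ∈ range (n + 1), s m * x ^ m) :
    iterInt (List.ofFn L) (fun t => ∏ i ∈ range n, (t - α i - z)) =
      ∑ i ∈ range (n + 1), ∑ m ∈ Icc i n,
        (-1 : ℝ) ^ i * (m.choose i : ℝ) * s m *
          (∏ j, L j) ^ (m - i + 1) / (((m - i : ℕ) : ℝ) + 1) ^ k * z ^ i := by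
  have hexpand (t : ℝ) : ∏ i ∈ range n, (t - α i - z) =
      ∑ p ∈ (range (n + 1)).sigma (fun i => Icc i n),
        (-1) ^ p.1 * (p.2.choose p.1 : ℝ) * s p.2 * z ^ p.1 * t ^ (p.2 - p.1) := by
    simp only [sub_right_comm _ _ z, hs, sum_mul_sub_pow_eq_sum_sum, sum_sigma]
  rw [funext hexpand, iterInt_sum_mul_pow_s14, sum_sigma]
  simp only [iterInt_pow, List.prod_ofFn, List.length_ofFn]
  exact sum_congr rfl fun i _ => sum_congr rfl fun m _ => by ring

theorem stmt14 (n k : ℕ) (hk : 1 ≤ k) (α : ℕ → ℝ) (L : Fin k → ℝ)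
    (hL : ∀ i, L i ≠ 0) (z : ℝ) (s : ℕ → ℝ)
    (hs : ∀ x : ℝ, ∏ i ∈ range n, (x - α i) = ∑ m ∈ range (n + 1), s m * x ^ m) :
    iterInt (List.ofFn L) (fun t => ∏ i ∈ range n, (t - α i - z)) =
      ∑ i ∈ range (n + 1), ∑ m ∈ Icc i n,
        (-1 : ℝ) ^ i * (m.choose i : ℝ) * s m *
          (∏ j, L j) ^ (m - i + 1) / (((m - i : ℕ) : ℝ) + 1) ^ k * z ^ i :=
  stmt14_general n k α L z s hs
end

section
/- For all integers n ≥ 0 and k ≥ 1, every sequence of real numbers ᾱ = (α₀, α₁, …, α_{n−1}), all nonzero real numbers ℓ₁, …, ℓ_k, and every real number z, the multiparameter poly-Bernoulli polynomials are expressed through the multiparameter poly-Cauchy polynomials of the second kind by B_{n,ᾱ,L}^{(k)}(z) = Σ_{j=0}^{n} Σ_{m=j}^{n} (−1)^n m! S_ᾱ(n,m) S_ᾱ(m,j) Ĉ_{j,L}^{(k)}(z;ᾱ). -/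
/-!
After interchanging the sums over `j` and `m`, fix `m`. Evaluating the Stirling expansion
`x ^ m = ∑ j, S(m, j) ∏_{i<j} (x - α i)` at `x = z - t` shows that `∑ j, S(m, j) Ĉ_j(z)` is the
iterated integral of `(z - t) ^ m`. On polynomials the iterated integral sends `t ^ r` to
`(ℓ₁⋯ℓ_k) ^ (r + 1) / (r + 1) ^ k`, so the binomial expansion of `(z - t) ^ m` yields the
inner sum of the poly-Bernoulli side.
-/

open Finset

open Polynomial

lemma iterInt_sum_monomials (ls : List ℝ) (d : ℕ) (c : ℕ → ℝ) :
    iterInt ls (fun t => ∑ i ∈ range d, c i * t ^ i) =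
      ∑ i ∈ range d, c i * ls.prod ^ (i + 1) / ((i : ℝ) + 1) ^ ls.length := by
  induction ls generalizing c with
  | nil => simp [iterInt]
  | cons l ls ih =>
    have inner (x : ℝ) : iterInt ls (fun y => ∑ i ∈ range d, c i * (x * y) ^ i) =
        ∑ i ∈ range d, x ^ i * (c i * ls.prod ^ (i + 1) / ((i : ℝ) + 1) ^ ls.length) := by
      simp_rw [mul_pow, ← mul_assoc, ih fun i => c i * x ^ i]
      exact sum_congr rfl fun i _ => by ring
    simp only [iterInt, inner]
    rw [intervalIntegral.integral_finsetSum fun i _ =>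
      (by fun_prop : Continuous _).intervalIntegrable _ _]
    refine sum_congr rfl fun i _ => ?_
    rw [intervalIntegral.integral_mul_const, integral_pow, List.prod_cons, List.length_cons]
    field_simp
    ring

-- `iterInt ls` on polynomial functions (`iterInt_eval`); as a linear map its linearity comes for free.
noncomputable def iterIntPoly (ls : List ℝ) : ℝ[X] →ₗ[ℝ] ℝ :=
  lsum fun i => LinearMap.mulRight ℝ (ls.prod ^ (i + 1) / ((i : ℝ) + 1) ^ ls.length)

lemma iterIntPoly_monomial (ls : List ℝ) (i : ℕ) (a : ℝ) :
    iterIntPoly ls (monomial i a) = a * ls.prod ^ (i + 1) / ((i : ℝ) + 1) ^ ls.length := by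
  simp [iterIntPoly, mul_div_assoc]

lemma iterInt_eval (ls : List ℝ) (Q : ℝ[X]) :
    iterInt ls (fun t => Q.eval t) = iterIntPoly ls Q := by
  simp_rw [eval_eq_sum_range, iterInt_sum_monomials, iterIntPoly, lsum_apply,
    sum_over_range Q (fun i => LinearMap.map_zero _), LinearMap.mulRight_apply, mul_div_assoc]

lemma iterIntPoly_C_sub_X_pow (ls : List ℝ) (z : ℝ) (m : ℕ) :
    iterIntPoly ls ((C z - X) ^ m) =
      ∑ i ∈ range (m + 1), (-1) ^ m * (m.choose i : ℝ) * ls.prod ^ (m - i + 1) /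
        (((m - i : ℕ) : ℝ) + 1) ^ ls.length * (-z) ^ i := by
  have expand : (C z - X) ^ m =
      ∑ i ∈ range (m + 1), monomial (m - i) ((-1) ^ m * (m.choose i : ℝ) * (-z) ^ i) := by
    rw [show C z - X = -1 * (C (-z) + X) by simp; ring, mul_pow, add_pow, mul_sum]
    refine sum_congr rfl fun i _ => ?_
    rw [← C_mul_X_pow_eq_monomial]
    simp only [map_mul, map_pow, map_neg, map_one, map_natCast]
    ring
  rw [expand, map_sum]
  exact sum_congr rfl fun i _ => by rw [iterIntPoly_monomial]; ring

lemma C_sub_X_pow_eq_sum {m : ℕ} (α : ℕ → ℝ) (S : ℕ → ℝ)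
    (hS : ∀ x : ℝ, x ^ m = ∑ j ∈ range (m + 1), S j * ∏ i ∈ range j, (x - α i)) (z : ℝ) :
    (C z - X) ^ m = ∑ j ∈ range (m + 1), C (S j) * ∏ i ∈ range j, (C (z - α i) - X) := by
  refine Polynomial.funext fun t => ?_
  simp only [eval_pow, eval_sub, eval_C, eval_X, eval_finsetSum, eval_mul, eval_prod, hS (z - t)]
  exact sum_congr rfl fun j _ => by congr 1; exact prod_congr rfl fun i _ => by ring

lemma sum_mul_iterInt_eq {m : ℕ} (α : ℕ → ℝ) (S : ℕ → ℝ)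
    (hS : ∀ x : ℝ, x ^ m = ∑ j ∈ range (m + 1), S j * ∏ i ∈ range j, (x - α i))
    (ls : List ℝ) (z : ℝ) :
    ∑ j ∈ range (m + 1), S j * iterInt ls (fun t => ∏ i ∈ range j, (-t - α i + z)) =
      iterIntPoly ls ((C z - X) ^ m) := by
  have integrand (j : ℕ) : (fun t => ∏ i ∈ range j, (-t - α i + z)) =
      fun t => (∏ i ∈ range j, (C (z - α i) - X)).eval t := by
    ext t
    simp only [eval_prod, eval_sub, eval_C, eval_X]
    exact prod_congr rfl fun i _ => by ring
  simp_rw [C_sub_X_pow_eq_sum α S hS, map_sum, ← smul_eq_C_mul, map_smul, integrand,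
    iterInt_eval, smul_eq_mul]

lemma sum_range_sum_Icc_comm {M : Type*} [AddCommMonoid M] (n : ℕ) (f : ℕ → ℕ → M) :
    ∑ j ∈ range (n + 1), ∑ m ∈ Icc j n, f j m =
      ∑ m ∈ range (n + 1), ∑ j ∈ range (m + 1), f j m := by
  simpa only [← Nat.Ico_zero_eq_range, Ico_add_one_right_eq_Icc] using sum_Ico_Ico_comm 0 (n + 1) f

theorem stmt17_general (n k : ℕ) (α : ℕ → ℝ) (L : Fin k → ℝ)
    (z : ℝ) (S : ℕ → ℕ → ℝ)
    (hS : ∀ p ≤ n, ∀ x : ℝ,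
      x ^ p = ∑ m ∈ range (p + 1), S p m * ∏ i ∈ range m, (x - α i)) :
    (-1 : ℝ) ^ n * ∑ i ∈ range (n + 1), ∑ m ∈ Icc i n,
        (-1 : ℝ) ^ m * (m.factorial : ℝ) * (m.choose i : ℝ) * S n m *
          (∏ j, L j) ^ (m - i + 1) / (((m - i : ℕ) : ℝ) + 1) ^ k * (-z) ^ i =
      ∑ j ∈ range (n + 1), ∑ m ∈ Icc j n,
        (-1 : ℝ) ^ n * (m.factorial : ℝ) * S n m * S m j *
          iterInt (List.ofFn L) (fun t => ∏ i ∈ range j, (-t - α i + z)) := by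
  simp_rw [mul_sum]
  rw [sum_range_sum_Icc_comm, sum_range_sum_Icc_comm]
  refine sum_congr rfl fun m hm => ?_
  have hSm := hS m (Nat.lt_succ_iff.mp (mem_range.mp hm))
  calc _ = (-1) ^ n * m.factorial * S n m * iterIntPoly (List.ofFn L) ((C z - X) ^ m) := by
        rw [iterIntPoly_C_sub_X_pow, List.prod_ofFn, List.length_ofFn, mul_sum]
        exact sum_congr rfl fun i _ => by ring
    _ = _ := by
        rw [← sum_mul_iterInt_eq α (S m) hSm, mul_sum]
        exact sum_congr rfl fun j _ => by ring

theorem stmt17 (n k : ℕ) (hk : 1 ≤ k) (α : ℕ → ℝ) (L : Fin k → ℝ)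
    (hL : ∀ i, L i ≠ 0) (z : ℝ) (S : ℕ → ℕ → ℝ)
    (hS : ∀ p ≤ n, ∀ x : ℝ,
      x ^ p = ∑ m ∈ range (p + 1), S p m * ∏ i ∈ range m, (x - α i)) :
    (-1 : ℝ) ^ n * ∑ i ∈ range (n + 1), ∑ m ∈ Icc i n,
        (-1 : ℝ) ^ m * (m.factorial : ℝ) * (m.choose i : ℝ) * S n m *
          (∏ j, L j) ^ (m - i + 1) / (((m - i : ℕ) : ℝ) + 1) ^ k * (-z) ^ i =
      ∑ j ∈ range (n + 1), ∑ m ∈ Icc j n,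
        (-1 : ℝ) ^ n * (m.factorial : ℝ) * S n m * S m j *
          iterInt (List.ofFn L) (fun t => ∏ i ∈ range j, (-t - α i + z)) :=
  stmt17_general n k α L z S hS
end
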